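/- For all α,β∈ℝ and j∈ℕ₀ the generalized Jacobi polynomials satisfy: (i) P̂_j^{(α,β)}(1) = [(α+1)_j/(j!(j+α+β+1)_j)] δ_{j₀,0}, where j₀ = −j−α−β if −j−α−β∈{1,…,j} and j₀=0 otherwise; (ii) if −α∈ℕ and j≥−α, then P̂_j^{(α,β)}(t) = (1/(j+α+1)_{−α}) ((t−1)/2)^{−α} P̂_{j+α}^{(−α,β)}(t) as an identity of polynomials; (iii) (d/dt) P̂_j^{(α,β)}(t) = (1/2) P̂_{j−1}^{(α+1,β+1)}(t). -/

import Mathlib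

open MeasureTheory Metric Set

noncomputable section

abbrev Euc (d : ℕ) := EuclideanSpace ℝ (Fin d)

namespace Paper

variable {d : ℕ}

/-- The closed unit ball in `ℝ^d`. -/
def Ball (d : ℕ) : Set (Euc d) := Metric.closedBall 0 1

/-- The surface measure on the unit sphere. -/
def sphMeas (d : ℕ) : Measure (Metric.sphere (0 : Euc d) 1) :=
  (volume : Measure (Euc d)).toSphere

/-- Partial derivative `∂_i`. -/
def pd (i : Fin d) (f : Euc d → ℝ) : Euc d → ℝ :=
  fun x => fderiv ℝ f x (EuclideanSpace.single i 1)

/-- Iterated mixed partial derivative `∂^α`. -/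
def pdm (α : Fin d → ℕ) (f : Euc d → ℝ) : Euc d → ℝ :=
  (List.finRange d).foldr (fun i g => (pd i)^[α i] g) f

/-- The Laplace operator. -/
def lap (f : Euc d → ℝ) : Euc d → ℝ := fun x => ∑ i, pd i (pd i f) x

/-- Iterated Laplacian `Δ^k`. -/
def lapk (k : ℕ) (f : Euc d → ℝ) : Euc d → ℝ := lap^[k] f

/-- The normalized inner product on the ball. -/
def ipBall (u v : Euc d → ℝ) : ℝ :=
  (∫ x in Ball d, u x * v x) / (volume (Ball d)).toReal

/-- The normalized inner product on the sphere. -/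
def ipSph (u v : Euc d → ℝ) : ℝ :=
  (∫ ξ : Metric.sphere (0 : Euc d) 1, u ξ * v ξ ∂(sphMeas d)) /
    (sphMeas d Set.univ).toReal

/-- `L^p(B^d)` norm. -/
def lpBall (p : ℝ) (f : Euc d → ℝ) : ℝ :=
  (∫ x in Ball d, |f x| ^ p) ^ (1 / p)

/-- The finite set of multi-indices of total order `≤ r`. -/
def mIdx (d r : ℕ) : Finset (Fin d → ℕ) :=
  Finset.filter (fun α => (∑ i, α i) ≤ r) (Fintype.piFinset fun _ => Finset.range (r + 1))

/-- The Sobolev norm `‖f‖_{W_p^r(B^d)}`. -/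
def sobNorm (p : ℝ) (r : ℕ) (f : Euc d → ℝ) : ℝ :=
  (∑ α ∈ mIdx d r, (lpBall p (pdm α f)) ^ p) ^ (1 / p)

/-- Membership model for `W_p^r(B^d)`: `f` has continuous derivatives up to order `r`. -/
def MemW (r : ℕ) (f : Euc d → ℝ) : Prop := ContDiff ℝ (r : ℕ∞) f

/-- Polynomial function of total degree at most `n`. -/
def IsPolyDeg (n : ℕ) (f : Euc d → ℝ) : Prop :=
  ∃ P : MvPolynomial (Fin d) ℝ, P.totalDegree ≤ n ∧ ∀ x : Euc d, f x = MvPolynomial.eval x P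

/-- `⟨∇^s f, ∇^s g⟩_{B^d}` where `∇^{2m} = Δ^m` and `∇^{2m+1} = ∇ Δ^m`. -/
def ipNabla (s : ℕ) (f g : Euc d → ℝ) : ℝ :=
  if s % 2 = 0 then ipBall (lapk (s / 2) f) (lapk (s / 2) g)
  else ∑ i : Fin d, ipBall (pd i (lapk (s / 2) f)) (pd i (lapk (s / 2) g))

/-- The Sobolev inner product `⟨f,g⟩_{-s}`. -/
def ipNeg (s : ℕ) (lam : ℕ → ℝ) (f g : Euc d → ℝ) : ℝ :=
  ipNabla s f g + ∑ k ∈ Finset.range ((s + 1) / 2), lam k * ipSph (lapk k f) (lapk k g)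

/-- `P ∈ V_n^d` w.r.t. a bilinear form `ip`: a polynomial of degree `n` orthogonal to all
polynomials of lower degree. -/
def InV (ip : (Euc d → ℝ) → (Euc d → ℝ) → ℝ) (n : ℕ) (P : Euc d → ℝ) : Prop :=
  IsPolyDeg n P ∧ ∀ m < n, ∀ Q : Euc d → ℝ, IsPolyDeg m Q → ip P Q = 0

/-- `proj` is the family of orthogonal projections onto the spaces `V_n^d` w.r.t. `ip`,
defined for all functions in the (smooth model of) the Sobolev space `W_2^s`. -/
def IsProjFamily (s : ℕ) (ip : (Euc d → ℝ) → (Euc d → ℝ) → ℝ)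
    (proj : ℕ → (Euc d → ℝ) → (Euc d → ℝ)) : Prop :=
  ∀ f : Euc d → ℝ, ContDiff ℝ (s : ℕ∞) f → ∀ n : ℕ,
    InV ip n (proj n f) ∧
    ∀ Q : Euc d → ℝ, InV ip n Q → ip (fun x => f x - proj n f x) Q = 0

/-- The partial sum `S_n f` of the orthogonal expansion. -/
def Spart (proj : ℕ → (Euc d → ℝ) → (Euc d → ℝ)) (n : ℕ) (f : Euc d → ℝ) : Euc d → ℝ :=
  fun x => ∑ m ∈ Finset.range (n + 1), proj m f x

/-- An admissible cut-off function. -/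
def Admissible (η : ℝ → ℝ) : Prop :=
  ContDiff ℝ (⊤ : ℕ∞) η ∧ (∀ t ∈ Set.Icc (0:ℝ) 1, η t = 1) ∧ ∀ t : ℝ, 2 ≤ t → η t = 0

/-- The near-best approximation operator `S_{n,η} f = Σ_k η(k/n) proj_k f`. -/
def Seta (η : ℝ → ℝ) (proj : ℕ → (Euc d → ℝ) → (Euc d → ℝ)) (n : ℕ) (f : Euc d → ℝ) :
    Euc d → ℝ :=
  fun x => ∑ k ∈ Finset.range (2 * n), η ((k : ℝ) / n) * proj k f x

end Paper

namespace Paper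

/-- Pochhammer symbol `(a)_m = a(a+1)⋯(a+m−1)` for real `a`. -/
def poch (a : ℝ) (m : ℕ) : ℝ := (ascPochhammer ℝ m).eval a

/-- The classical Jacobi polynomial `P_j^{(a,b)}`, via its explicit expansion at `t = 1`. -/
def jacobiP (a b : ℝ) (j : ℕ) (t : ℝ) : ℝ :=
  ∑ k ∈ Finset.range (j + 1),
    poch ((k : ℝ) + a + 1) (j - k) * poch ((j : ℝ) + a + b + 1) k /
      ((j - k).factorial * k.factorial) * ((t - 1) / 2) ^ k

/-- `a_m^d`, the dimension of the space of spherical harmonics of degree `m` in `d` variables. -/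
def adim (d m : ℕ) : ℕ := Nat.choose (m + d - 1) (d - 1) - Nat.choose (m + d - 3) (d - 1)

/-- A (solid) spherical harmonic of degree `m`: a homogeneous harmonic polynomial. -/
def IsHarmHom {d : ℕ} (m : ℕ) (P : Euc d → ℝ) : Prop :=
  ∃ q : MvPolynomial (Fin d) ℝ, q.IsHomogeneous m ∧ (∀ x : Euc d, P x = MvPolynomial.eval x q) ∧
    ∀ x : Euc d, lap P x = 0

/-- `Y` is a graded orthonormal family of spherical harmonics: for each degree `m`,
`{Y m ℓ : ℓ < a_m^d}` is an orthonormal basis of `H_m^d`. -/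
def IsONBHarm (d : ℕ) (Y : ℕ → ℕ → (Euc d → ℝ)) : Prop :=
  (∀ m ℓ, ℓ < adim d m → IsHarmHom m (Y m ℓ)) ∧
  (∀ m ℓ ℓ', ℓ < adim d m → ℓ' < adim d m →
    ipSph (Y m ℓ) (Y m ℓ') = if ℓ = ℓ' then 1 else 0)

end Paper

namespace Paper

open Classical in
/-- The index `j₀ = j₀^{α,β}(j)`: equal to `−j−α−β` when `−j−α−β ∈ {1,…,j}`, else `0`. -/
def jzero (a b : ℝ) (j : ℕ) : ℕ :=
  if h : ∃ m ∈ Finset.Icc 1 j, (m : ℝ) = -(j : ℝ) - a - b then h.choose else 0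

/-- The generalized Jacobi polynomial `P̂_j^{(a,b)}(t)`, with `P̂_j := 0` for `j < 0`. -/
def PhatZ (a b : ℝ) (j : ℤ) (t : ℝ) : ℝ :=
  if j < 0 then 0
  else
    ∑ k ∈ Finset.Icc (jzero a b j.toNat) j.toNat,
      poch ((k : ℝ) + a + 1) (j.toNat - k) /
          ((j.toNat - k).factorial * k.factorial *
            poch ((j.toNat : ℝ) + a + b + k + 1) (j.toNat - k)) *
        ((t - 1) / 2) ^ k

/-- The generalized ball polynomial
`P_{j,ℓ}^{μ,n}(x) = (n−j+d/2)_j P̂_j^{(μ, n−2j+d/2−1)}(2‖x‖²−1) Y_ℓ^{n−2j}(x)`,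
with the convention that it vanishes unless `0 ≤ j` and `2j ≤ n`;
the harmonic factor `Y` (of degree `n−2j`) is supplied as an argument. -/
def Pgen {d : ℕ} (μ : ℝ) (n j : ℤ) (Yf : Euc d → ℝ) : Euc d → ℝ :=
  if 0 ≤ j ∧ 2 * j ≤ n then
    fun x =>
      poch ((n : ℝ) - (j : ℝ) + d / 2) j.toNat *
        PhatZ μ ((n : ℝ) - 2 * (j : ℝ) + d / 2 - 1) j (2 * ‖x‖ ^ 2 - 1) * Yf x
  else 0

end Paper


namespace S18

open Finset Paper

/-- coefficient of the generalized Jacobi polynomial -/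
def C (a b : ℝ) (j k : ℕ) : ℝ :=
  poch ((k : ℝ) + a + 1) (j - k) /
    ((j - k).factorial * k.factorial * poch ((j : ℝ) + a + b + k + 1) (j - k))

lemma poch_eval_prod (x : ℝ) (n : ℕ) : poch x n = ∏ i ∈ range n, (x + i) := by
  induction n with
  | zero => simp [poch]
  | succ n ih =>
    rw [poch, ascPochhammer_succ_eval, ← poch, ih, Finset.prod_range_succ]

lemma poch_eq_zero {x : ℝ} {n i : ℕ} (hi : i < n) (h : x + i = 0) : poch x n = 0 := by
  rw [poch_eval_prod]
  exact Finset.prod_eq_zero (Finset.mem_range.mpr hi) h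

lemma fact_poch (n m : ℕ) :
    (n.factorial : ℝ) * poch ((n : ℝ) + 1) m = ((n + m).factorial : ℝ) := by
  induction m with
  | zero => simp [poch]
  | succ m ih =>
    rw [poch, ascPochhammer_succ_eval, ← poch, ← mul_assoc, ih]
    push_cast [Nat.factorial_succ, ← Nat.add_assoc]
    ring

lemma poch_nat_ne (n m : ℕ) : poch ((n : ℝ) + 1) m ≠ 0 := by
  intro h
  have := fact_poch n m
  rw [h, mul_zero] at this
  exact (Nat.cast_ne_zero.mpr (Nat.factorial_ne_zero _)).symm this

lemma jzero_spec (a b : ℝ) (j : ℕ) :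
    (jzero a b j = 0 ∧ ¬ ∃ m ∈ Finset.Icc 1 j, (m : ℝ) = -(j : ℝ) - a - b) ∨
    (jzero a b j ∈ Finset.Icc 1 j ∧ ((jzero a b j : ℕ) : ℝ) = -(j : ℝ) - a - b) := by
  classical
  unfold jzero
  split_ifs with h
  · right
    exact h.choose_spec
  · left
    exact ⟨rfl, h⟩

/-- Terms with denominator zero vanish, so the sum can be taken over the full range. -/
lemma Phat_eq (a b : ℝ) (j : ℕ) (t : ℝ) :
    PhatZ a b (j : ℤ) t = ∑ k ∈ range (j + 1), C a b j k * ((t - 1) / 2) ^ k := by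
  rw [PhatZ, if_neg (by omega)]
  simp only [Int.toNat_natCast]
  refine Finset.sum_subset ?_ ?_
  · intro k hk
    simp only [Finset.mem_Icc, Finset.mem_range] at *
    omega
  · intro k hk hk'
    rcases jzero_spec a b j with ⟨hz, _⟩ | ⟨hz1, hz2⟩
    · simp only [Finset.mem_Icc, Finset.mem_range, hz] at hk hk'
      omega
    · simp only [Finset.mem_Icc, Finset.mem_range] at hk hk' hz1
      have hklt : k < jzero a b j := by omega
      have hD : poch ((j : ℝ) + a + b + k + 1) (j - k) = 0 := by
        refine poch_eq_zero (i := jzero a b j - k - 1) (by omega) ?_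
        have : ((jzero a b j - k - 1 : ℕ) : ℝ) = (jzero a b j : ℝ) - k - 1 := by
          rw [Nat.cast_sub (by omega), Nat.cast_sub (by omega), Nat.cast_one]
        rw [this, hz2]
        ring
      rw [hD, mul_zero, div_zero, zero_mul]

lemma C_succ (a b : ℝ) (j k : ℕ) (hj : 1 ≤ j) (hk : k < j) :
    C a b j (k + 1) * (k + 1) = C (a + 1) (b + 1) (j - 1) k := by
  have h1 : j - (k + 1) = (j - 1) - k := by omega
  have h2 : ((k : ℝ) + 1) + a + 1 = (k : ℝ) + (a + 1) + 1 := by ring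
  have h3 : (((j - 1 : ℕ)) : ℝ) = (j : ℝ) - 1 := by
    push_cast [Nat.cast_sub hj]; ring
  rw [C, C, h1, h3]
  have h4 : (j : ℝ) + a + b + ((k : ℕ) + 1 : ℕ) + 1 = ((j : ℝ) - 1) + (a + 1) + (b + 1) + k + 1 := by
    push_cast; ring
  rw [Nat.cast_add, Nat.cast_one, h2]
  rw [show (j : ℝ) + a + b + ((k : ℝ) + 1) + 1 = ((j : ℝ) - 1) + (a + 1) + (b + 1) + k + 1 from by ring]
  set N := poch ((k : ℝ) + (a + 1) + 1) ((j - 1) - k)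
  set D := poch (((j : ℝ) - 1) + (a + 1) + (b + 1) + k + 1) ((j - 1) - k)
  rw [Nat.factorial_succ]
  have hk1 : ((k : ℝ) + 1) ≠ 0 := by positivity
  rcases eq_or_ne D 0 with hD | hD
  · simp [hD]
  · push_cast
    field_simp

lemma fact_ne (n : ℕ) : ((n.factorial : ℝ)) ≠ 0 :=
  Nat.cast_ne_zero.mpr (Nat.factorial_ne_zero _)

lemma C_shift (a b : ℝ) (j k A : ℕ) (ha : (A : ℝ) = -a) (hA : A ≤ j) (hAk : A ≤ k)
    (hk : k ≤ j) :
    C a b j k = 1 / poch ((j : ℝ) + a + 1) A * C (-a) b (j - A) (k - A) := by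
  have hcjA : (((j - A : ℕ)) : ℝ) = (j : ℝ) - A := by push_cast [Nat.cast_sub hA]; ring
  have hckA : (((k - A : ℕ)) : ℝ) = (k : ℝ) - A := by push_cast [Nat.cast_sub hAk]; ring
  have e1 : (j - A) - (k - A) = j - k := by omega
  rw [C, C, e1, hcjA, hckA]
  have hP : poch ((j : ℝ) + a + 1) A = (j.factorial : ℝ) / ((j - A).factorial : ℝ) := by
    have := fact_poch (j - A) A
    rw [hcjA] at this
    rw [show (j : ℝ) + a + 1 = ((j : ℝ) - A) + 1 from by rw [ha]; ring]
    rw [eq_div_iff (fact_ne _), mul_comm, this]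
    congr 2
    omega
  have hN1 : poch ((k : ℝ) + a + 1) (j - k) = ((j - A).factorial : ℝ) / ((k - A).factorial : ℝ) := by
    have := fact_poch (k - A) (j - k)
    rw [hckA] at this
    rw [show (k : ℝ) + a + 1 = ((k : ℝ) - A) + 1 from by rw [ha]; ring]
    rw [eq_div_iff (fact_ne _), mul_comm, this]
    congr 2
    omega
  have hN2 : poch (((k : ℝ) - A) + -a + 1) (j - k) = ((j.factorial : ℝ)) / (k.factorial : ℝ) := by
    have := fact_poch k (j - k)
    rw [show ((k : ℝ) - A) + -a + 1 = (k : ℝ) + 1 from by rw [← ha]; ring]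
    rw [eq_div_iff (fact_ne _), mul_comm, this]
    congr 2
    omega
  have hD : ((j : ℝ) - A) + -a + b + ((k : ℝ) - A) + 1 = (j : ℝ) + a + b + k + 1 := by
    have haa : a = -(A : ℝ) := by linarith
    rw [haa]; ring
  rw [hD, hP, hN1, hN2]
  set D := poch ((j : ℝ) + a + b + k + 1) (j - k)
  rcases eq_or_ne D 0 with h | h
  · rw [h]; simp
  · field_simp

lemma C_lt_A (a b : ℝ) (j k A : ℕ) (ha : (A : ℝ) = -a) (hA : A ≤ j) (hk : k < A) :
    C a b j k = 0 := by
  have hN : poch ((k : ℝ) + a + 1) (j - k) = 0 := by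
    refine poch_eq_zero (i := A - 1 - k) (by omega) ?_
    have : ((A - 1 - k : ℕ) : ℝ) = (A : ℝ) - 1 - k := by
      rw [Nat.cast_sub (by omega), Nat.cast_sub (by omega), Nat.cast_one]
    rw [this]
    linarith
  rw [C, hN, zero_div]

end S18

/-- Properties of the generalized Jacobi polynomials: value at `t = 1`,
reduction of a negative integer first index, and the differentiation formula. -/
theorem statement18 (a b : ℝ) (j : ℕ) :
    (Paper.PhatZ a b (j : ℤ) 1 =
      Paper.poch (a + 1) j / (j.factorial * Paper.poch ((j : ℝ) + a + b + 1) j) *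
        (if Paper.jzero a b j = 0 then 1 else 0)) ∧
    (∀ A : ℕ, (A : ℝ) = -a → A ≤ j → ∀ t : ℝ,
      Paper.PhatZ a b (j : ℤ) t =
        1 / Paper.poch ((j : ℝ) + a + 1) A * ((t - 1) / 2) ^ A *
          Paper.PhatZ (-a) b ((j : ℤ) - A) t) ∧
    (∀ t : ℝ,
      deriv (fun u : ℝ => Paper.PhatZ a b (j : ℤ) u) t =
        1 / 2 * Paper.PhatZ (a + 1) (b + 1) ((j : ℤ) - 1) t) := by
  refine ⟨?_, ?_, ?_⟩
  · -- part (i): value at t = 1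
    rw [S18.Phat_eq]
    have h0 : ((1 : ℝ) - 1) / 2 = 0 := by norm_num
    simp only [h0, zero_pow_eq, mul_ite, mul_one, mul_zero]
    rw [Finset.sum_ite_eq' (Finset.range (j + 1)) 0]
    rw [if_pos (Finset.mem_range.mpr (by omega))]
    rcases S18.jzero_spec a b j with ⟨hz, _⟩ | ⟨hz1, hz2⟩
    · rw [hz, if_pos rfl]
      simp [S18.C]
    · have hzne : Paper.jzero a b j ≠ 0 := by
        simp only [Finset.mem_Icc] at hz1; omega
      rw [if_neg hzne]
      simp only [Finset.mem_Icc] at hz1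
      have hD : Paper.poch ((j : ℝ) + a + b + (0 : ℕ) + 1) (j - 0) = 0 := by
        refine S18.poch_eq_zero (i := Paper.jzero a b j - 1) (by omega) ?_
        have : ((Paper.jzero a b j - 1 : ℕ) : ℝ) = (Paper.jzero a b j : ℝ) - 1 := by
          rw [Nat.cast_sub (by omega), Nat.cast_one]
        rw [this, hz2]
        push_cast
        ring
      rw [S18.C, hD, mul_zero, div_zero]
  · -- part (ii): negative integer first index reduction
    intro A ha hA t
    have hjA : (j : ℤ) - A = ((j - A : ℕ) : ℤ) := by push_cast [hA]; ring
    rw [S18.Phat_eq a b j t, hjA, S18.Phat_eq (-a) b (j - A) t]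
    rw [Finset.mul_sum]
    have hsub : Finset.Ico A (j + 1) ⊆ Finset.range (j + 1) := by
      intro k hk
      simp only [Finset.mem_Ico, Finset.mem_range] at *
      omega
    rw [← Finset.sum_subset hsub (by
      intro k hk hk'
      simp only [Finset.mem_Ico, Finset.mem_range] at hk hk'
      rw [S18.C_lt_A a b j k A ha hA (by omega), zero_mul])]
    rw [Finset.sum_Ico_eq_sum_range]
    rw [show j + 1 - A = (j - A) + 1 by omega]
    refine Finset.sum_congr rfl ?_
    intro i hi
    simp only [Finset.mem_range] at hi
    rw [S18.C_shift a b j (A + i) A ha hA (by omega) (by omega)]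
    rw [show A + i - A = i by omega, pow_add]
    ring
  · -- part (iii): differentiation formula
    intro t
    have hfun : (fun u : ℝ => Paper.PhatZ a b (j : ℤ) u) =
        fun u : ℝ => ∑ k ∈ Finset.range (j + 1), S18.C a b j k * ((u - 1) / 2) ^ k :=
      funext fun u => S18.Phat_eq a b j u
    have hder : HasDerivAt (fun u : ℝ => ∑ k ∈ Finset.range (j + 1),
          S18.C a b j k * ((u - 1) / 2) ^ k)
        (∑ k ∈ Finset.range (j + 1),
          S18.C a b j k * ((k : ℝ) * ((t - 1) / 2) ^ (k - 1) * (1 / 2))) t := by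
      refine HasDerivAt.fun_sum ?_
      intro k _
      have h1 : HasDerivAt (fun u : ℝ => (u - 1) / 2) (1 / 2) t :=
        ((hasDerivAt_id t).sub_const 1).div_const 2
      exact (h1.pow k).const_mul _
    rw [hfun, hder.deriv]
    rcases Nat.eq_zero_or_pos j with hj | hj
    · subst hj
      simp [Paper.PhatZ]
    · have hj1 : ((j : ℤ) - 1) = ((j - 1 : ℕ) : ℤ) := by push_cast [hj]; ring
      rw [hj1, S18.Phat_eq (a + 1) (b + 1) (j - 1) t]
      rw [show (j - 1) + 1 = j by omega]
      rw [Finset.sum_range_succ']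
      rw [Finset.mul_sum]
      have h0 : S18.C a b j 0 * (((0 : ℕ) : ℝ) * ((t - 1) / 2) ^ (0 - 1) * (1 / 2)) = 0 := by
        simp
      rw [h0, add_zero]
      refine Finset.sum_congr rfl ?_
      intro k hk
      simp only [Finset.mem_range] at hk
      rw [← S18.C_succ a b j k (by omega) hk]
      rw [show (k + 1) - 1 = k by omega]
      push_cast
      ring
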